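/- arXiv:2308.02791 — 6 statements merged into one kernel-verified Lean document; each statement's English description precedes it below -/
import Mathlib

section
/- A sequence of monomials α₁,…,α_r in the polynomial ring K[x₁,…,xₙ] is a regular sequence if and only if their supports are pairwise disjoint, i.e., supp(α_i) ∩ supp(α_j) = ∅ for all 1 ≤ i ≠ j ≤ r. -/
/-!
Membership in a monomial ideal is decided exponent by exponent, so if `b` shares no variable with
any generator `x^a` of `I`, then `x^b f ∈ I` forces `f ∈ I`; this makes disjointly supported
monomials a regular sequence. Conversely, let `t` be the first index for which `α_t` shares a
variable with an earlier `α_s`. Then `x^(α_s - α_t)` is killed by `x^(α_t)` modulo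
`I = (x^(α_j) : j < t)`, yet it is not in `I`: it is not divisible by `x^(α_s)` because of the
shared variable, and any other `x^(α_j)` dividing it would have support inside that of `α_s`,
which the minimality of `t` forbids.
-/

open MvPolynomial RingTheory.Sequence

namespace Finsupp

variable {σ : Type*}

theorem le_of_le_add_of_disjoint_support {a b m : σ →₀ ℕ} (hab : Disjoint a.support b.support)
    (h : a ≤ b + m) : a ≤ m := by
  intro x
  by_cases hx : x ∈ a.support
  · simpa [notMem_support_iff.mp (Finset.disjoint_left.mp hab hx)] using h x
  · simp [notMem_support_iff.mp hx]

theorem self_le_tsub_iff_disjoint_support {a b : σ →₀ ℕ} :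
    a ≤ a - b ↔ Disjoint a.support b.support := by
  simp only [le_def, tsub_apply, Finset.disjoint_left, mem_support_iff, ne_eq]
  refine forall_congr' fun x => ?_
  omega

theorem eq_zero_of_le_of_disjoint_support {a b : σ →₀ ℕ} (hle : a ≤ b)
    (hab : Disjoint a.support b.support) : a = 0 :=
  support_eq_empty.mp <| Finset.disjoint_self_iff_empty _ |>.mp <|
    hab.mono_right (support_mono hle)

end Finsupp

namespace Ideal

variable {R : Type*} [Semiring R]

theorem ofList_take_ofFn {r : ℕ} (f : Fin r → R) (i : Fin r) :
    ofList ((List.ofFn f).take i) = span (f '' Set.Iio i) := by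
  rw [ofList]
  congr 1
  ext x
  simp only [List.mem_take_iff_getElem, List.getElem_ofFn, List.length_ofFn, lt_min_iff,
    Set.mem_image, Set.mem_Iio]
  constructor
  · rintro ⟨j, hj, rfl⟩
    exact ⟨⟨j, hj.2⟩, hj.1, rfl⟩
  · rintro ⟨j, hj, rfl⟩
    exact ⟨j, ⟨hj, j.2⟩, rfl⟩

theorem ofList_ofFn {r : ℕ} (f : Fin r → R) :
    ofList (List.ofFn f) = span (Set.range f) := by
  simp only [ofList, List.mem_ofFn]
  rfl

end Ideal

namespace RingTheory.Sequence

variable {R M : Type*} [CommRing R] [AddCommGroup M] [Module R M]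

theorem isWeaklyRegular_ofFn_iff {r : ℕ} (f : Fin r → R) :
    IsWeaklyRegular M (List.ofFn f) ↔
      ∀ i, IsSMulRegular (M ⧸ (Ideal.span (f '' Set.Iio i) • ⊤ : Submodule R M)) (f i) := by
  rw [isWeaklyRegular_iff]
  constructor
  · intro h i
    rw [← Ideal.ofList_take_ofFn]
    simpa using h i (by simp)
  · intro h i hi
    have hi' : i < r := by simpa using hi
    have hreg := h ⟨i, hi'⟩
    rw [← Ideal.ofList_take_ofFn] at hreg
    simpa using hreg

theorem isWeaklyRegular_self_ofFn_iff {r : ℕ} (f : Fin r → R) :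
    IsWeaklyRegular R (List.ofFn f) ↔
      ∀ i, IsSMulRegular (R ⧸ Ideal.span (f '' Set.Iio i)) (f i) :=
  (isWeaklyRegular_ofFn_iff f).trans <| forall_congr' fun _ => by rw [smul_eq_mul, Ideal.mul_top]

end RingTheory.Sequence

namespace MvPolynomial

variable {σ : Type*} (R : Type*)

noncomputable def monomialIdeal [CommSemiring R] (A : Set (σ →₀ ℕ)) : Ideal (MvPolynomial σ R) :=
  Ideal.span ((fun a => monomial a (1 : R)) '' A)

variable {R}

section CommSemiring

variable [CommSemiring R] {A : Set (σ →₀ ℕ)}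

theorem mem_monomialIdeal {f : MvPolynomial σ R} :
    f ∈ monomialIdeal R A ↔ ∀ m ∈ f.support, ∃ a ∈ A, a ≤ m :=
  mem_ideal_span_monomial_image

theorem monomial_one_mul_mem_monomialIdeal_iff {b : σ →₀ ℕ}
    (hA : ∀ a ∈ A, Disjoint a.support b.support) {f : MvPolynomial σ R} :
    monomial b 1 * f ∈ monomialIdeal R A ↔ f ∈ monomialIdeal R A := by
  refine ⟨fun h => ?_, Ideal.mul_mem_left _ _⟩
  rw [mem_monomialIdeal] at h ⊢
  intro m hm
  have hbm : b + m ∈ (monomial b 1 * f).support := by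
    rwa [mem_support_iff, coeff_monomial_mul, one_mul, ← mem_support_iff]
  obtain ⟨a, ha, hle⟩ := h _ hbm
  exact ⟨a, ha, Finsupp.le_of_le_add_of_disjoint_support (hA a ha) hle⟩

theorem monomialIdeal_ne_top [Nontrivial R] (hA : 0 ∉ A) : monomialIdeal R A ≠ ⊤ := by
  intro htop
  obtain ⟨a, ha, hle⟩ := mem_monomialIdeal.mp ((Ideal.eq_top_iff_one _).mp htop) 0
    (by simp)
  exact hA (nonpos_iff_eq_zero.mp hle ▸ ha)

end CommSemiring

section CommRing

variable [CommRing R] {A : Set (σ →₀ ℕ)}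

theorem isSMulRegular_quotient_monomialIdeal {b : σ →₀ ℕ}
    (hA : ∀ a ∈ A, Disjoint a.support b.support) :
    IsSMulRegular (MvPolynomial σ R ⧸ monomialIdeal R A) (monomial b (1 : R)) :=
  (isSMulRegular_quotient_iff_mem_of_smul_mem _ _).mpr fun _ hf =>
    (monomial_one_mul_mem_monomialIdeal_iff hA).mp hf

theorem not_isSMulRegular_quotient_monomialIdeal [Nontrivial R] {a b : σ →₀ ℕ} (ha : a ∈ A)
    (hA : ∀ c ∈ A, ¬c ≤ a - b) :
    ¬IsSMulRegular (MvPolynomial σ R ⧸ monomialIdeal R A) (monomial b (1 : R)) := by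
  intro hreg
  have hmul : monomial b (1 : R) • monomial (a - b) 1 ∈ monomialIdeal R A := by
    rw [smul_eq_mul, monomial_mul, one_mul, mem_monomialIdeal]
    intro m hm
    rw [Finset.mem_singleton.mp (support_monomial_subset hm)]
    exact ⟨a, ha, le_add_tsub⟩
  obtain ⟨c, hc, hle⟩ :=
    mem_monomialIdeal.mp (mem_of_isSMulRegular_quotient_of_smul_mem hreg hmul) (a - b)
      (by classical simp [support_monomial])
  exact hA c hc hle

theorem pairwise_disjoint_support_of_isSMulRegular [Nontrivial R] {ι : Type*} [LinearOrder ι]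
    [WellFoundedLT ι] {α : ι → σ →₀ ℕ} (hα : ∀ k, α k ≠ 0)
    (hreg : ∀ t, IsSMulRegular (MvPolynomial σ R ⧸ monomialIdeal R (α '' Set.Iio t))
      (monomial (α t) (1 : R))) :
    Pairwise fun s t => Disjoint (α s).support (α t).support := by
  suffices h : ∀ t, ∀ s < t, Disjoint (α s).support (α t).support from
    fun s t hst => hst.lt_or_gt.elim (h t s) fun hts => (h s t hts).symm
  intro t
  induction t using WellFoundedLT.induction with
  | ind t ih =>
  intro s hst
  by_contra hoverlap
  refine not_isSMulRegular_quotient_monomialIdeal (Set.mem_image_of_mem α (Set.mem_Iio.mpr hst)) ?_ (hreg t)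
  rintro _ ⟨j, hjt, rfl⟩ hj
  obtain rfl | hjs := eq_or_ne j s
  · exact hoverlap (Finsupp.self_le_tsub_iff_disjoint_support.mp hj)
  · have hdisj : Disjoint (α j).support (α s).support :=
      hjs.lt_or_gt.elim (ih s hst j) fun hsj => (ih j hjt s hsj).symm
    exact hα j (Finsupp.eq_zero_of_le_of_disjoint_support (hj.trans tsub_le_self) hdisj)

end CommRing

end MvPolynomial

/-- A sequence of (nonconstant) monomials `α₁,…,α_r` in `K[x₁,…,xₙ]` is a regular
sequence if and only if their supports are pairwise disjoint. -/
theorem stmt_0 {K : Type} [Field K] {n : ℕ} {r : ℕ} (α : Fin r → (Fin n →₀ ℕ))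
    (hα : ∀ k, α k ≠ 0) :
    RingTheory.Sequence.IsRegular (MvPolynomial (Fin n) K)
        (List.ofFn fun k => monomial (α k) (1 : K))
      ↔ ∀ s t : Fin r, s ≠ t → Disjoint (α s).support (α t).support := by
  have hspan (S : Set (Fin r)) :
      Ideal.span ((fun k => monomial (α k) (1 : K)) '' S) = monomialIdeal K (α '' S) := by
    rw [monomialIdeal, Set.image_image]
  rw [isRegular_iff, isWeaklyRegular_self_ofFn_iff, Ideal.ofList_ofFn, ← Set.image_univ,
    smul_eq_mul, Ideal.mul_top, hspan]
  constructor
  · rintro ⟨hreg, -⟩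
    exact pairwise_disjoint_support_of_isSMulRegular hα fun t => hspan _ ▸ hreg t
  · intro hdisj
    refine ⟨fun t => (hspan _).symm ▸ isSMulRegular_quotient_monomialIdeal ?_,
      (monomialIdeal_ne_top ?_).symm⟩
    · rintro _ ⟨s, hst, rfl⟩
      exact hdisj s t hst.ne
    · rintro ⟨k, -, hk⟩
      exact hα k hk
end

section
/- For all integers i ≥ 0 and h ≥ 2, the identity ∑_{p=h-1}^{2h-2} (2h-1-p)·C(p, i) = C(2h, i+2) - (i+3)·C(h, i+2) holds, where C(n,k) denotes the binomial coefficient. -/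
/-- Hockey stick identity in ℤ starting at `a`. -/
lemma hockey_aux (i a : ℕ) : ∀ n : ℕ,
    ∑ p ∈ Finset.Icc a (a + n), ((Nat.choose p i : ℤ))
      = (Nat.choose (a + n + 1) (i + 1) : ℤ) - (Nat.choose a (i + 1) : ℤ) := by
  intro n
  induction n with
  | zero =>
    simp only [Nat.add_zero, Finset.Icc_self, Finset.sum_singleton]
    have := Nat.choose_succ_succ' a i
    push_cast [this]
    ring
  | succ n ih =>
    rw [show a + (n + 1) = (a + n) + 1 from rfl,
      Finset.sum_Icc_succ_top (by omega : a ≤ a + n + 1), ih]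
    have h1 := Nat.choose_succ_succ' (a + n + 1) i
    have h2 := Nat.choose_succ_succ' (a + n) i
    push_cast [h1]
    ring

lemma hockey_aux' (i a m : ℕ) (hm : a ≤ m) :
    ∑ p ∈ Finset.Icc a m, ((Nat.choose p i : ℤ))
      = (Nat.choose (m + 1) (i + 1) : ℤ) - (Nat.choose a (i + 1) : ℤ) := by
  have h := hockey_aux i a (m - a)
  rwa [show a + (m - a) = m by omega] at h

/-- For all integers `i ≥ 0` and `h ≥ 2`,
`∑_{p=h-1}^{2h-2} (2h-1-p)·C(p, i) = C(2h, i+2) - (i+3)·C(h, i+2)`. -/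
theorem stmt_2 (i h : ℕ) (hh : 2 ≤ h) :
    ∑ p ∈ Finset.Icc (h - 1) (2 * h - 2), ((2 * h - 1 - p : ℕ) : ℤ) * (Nat.choose p i : ℤ)
      = (Nat.choose (2 * h) (i + 2) : ℤ) - (i + 3) * (Nat.choose h (i + 2) : ℤ) := by
  obtain ⟨a, rfl⟩ : ∃ a, h = a + 1 := ⟨h - 1, by omega⟩
  rw [show (a + 1) - 1 = a from rfl, show 2 * (a + 1) - 2 = 2 * a by omega]
  have step1 : ∑ p ∈ Finset.Icc a (2 * a), ((2 * (a + 1) - 1 - p : ℕ) : ℤ) * (Nat.choose p i : ℤ)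
      = ∑ p ∈ Finset.Icc a (2 * a), ∑ m ∈ Finset.Icc p (2 * a), (Nat.choose p i : ℤ) := by
    refine Finset.sum_congr rfl fun p hp => ?_
    simp only [Finset.mem_Icc] at hp
    rw [Finset.sum_const, Nat.card_Icc, nsmul_eq_mul,
      show 2 * a + 1 - p = 2 * (a + 1) - 1 - p by omega]
  rw [step1, show 2 * (a + 1) = 2 * a + 2 by ring]
  have step2 : ∑ p ∈ Finset.Icc a (2 * a), ∑ m ∈ Finset.Icc p (2 * a), (Nat.choose p i : ℤ)
      = ∑ m ∈ Finset.Icc a (2 * a), ∑ p ∈ Finset.Icc a m, (Nat.choose p i : ℤ) := by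
    simp only [← Finset.Ico_add_one_right_eq_Icc]
    exact Finset.sum_Ico_Ico_comm a (2 * a + 1) fun p m => (Nat.choose p i : ℤ)
  rw [step2]
  have step3 : ∑ m ∈ Finset.Icc a (2 * a), ∑ p ∈ Finset.Icc a m, (Nat.choose p i : ℤ)
      = (∑ m ∈ Finset.Icc a (2 * a), (Nat.choose (m + 1) (i + 1) : ℤ))
        - (a + 1) * (Nat.choose a (i + 1) : ℤ) := by
    rw [Finset.sum_congr rfl fun m hm => hockey_aux' i a m (Finset.mem_Icc.mp hm).1,
      Finset.sum_sub_distrib, Finset.sum_const, Nat.card_Icc, nsmul_eq_mul,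
      show 2 * a + 1 - a = a + 1 by omega]
    push_cast
    ring
  rw [step3]
  have step4 : ∑ m ∈ Finset.Icc a (2 * a), (Nat.choose (m + 1) (i + 1) : ℤ)
      = ∑ q ∈ Finset.Icc (a + 1) (2 * a + 1), (Nat.choose q (i + 1) : ℤ) := by
    rw [← Finset.map_add_right_Icc a (2 * a) 1, Finset.sum_map]
    rfl
  rw [step4, hockey_aux' (i + 1) (a + 1) (2 * a + 1) (by omega)]
  have key : ((a + 1 : ℕ) : ℤ) * (Nat.choose a (i + 1) : ℤ)
      = (Nat.choose (a + 1) (i + 2) : ℤ) * ((i + 2 : ℕ) : ℤ) := by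
    exact_mod_cast congrArg (Nat.cast : ℕ → ℤ) (Nat.add_one_mul_choose_eq a (i + 1))
  push_cast at key ⊢
  rw [show 2 * a + 1 + 1 = 2 * a + 2 by ring]
  linarith [key]
end

section
/- Let I = (f₁ = x₁x₂x₃x₄x₅x₆, f₂ = x₁x₂x₃x₄x₇x₈x₉, f₃ = x₃x₄x₅x₆x₇, f₄ = x₅x₆x₇x₈) in K[x₁,…,x₉]. Then (f₁) : f₂ = (x₅x₆), (f₁, f₂) : f₃ = (x₁x₂), and (f₁, f₂, f₃) : f₄ = (x₃x₄); in particular, the successive colon ideals with respect to this order are each generated by a single monomial of degree 2. -/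
/-!
All ideals involved are monomial ideals. A polynomial `g` lies in `(x^a₁, …, x^aₖ) : x^b` iff every
monomial `x^m` of `g` has some `aᵢ ≤ m + b`; for squarefree monomials `x_A = ∏_{i ∈ A} xᵢ` this reads
`A \ B ⊆ supp m`, so the colon ideal is generated by the `x_{Aᵢ \ B}`. In each of the three cases one of
the sets `Aᵢ \ B` is contained in all the others, and that single monomial generates.
-/

open MvPolynomial Finsupp

namespace Finsupp

variable {σ : Type*} [DecidableEq σ]

theorem finset_sum_single_one_apply (A : Finset σ) (j : σ) :
    (∑ i ∈ A, single i 1 : σ →₀ ℕ) j = if j ∈ A then 1 else 0 := by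
  simp [finsetSum_apply, single_apply]

theorem finset_sum_single_one_le_add_iff (A B : Finset σ) (m : σ →₀ ℕ) :
    ∑ i ∈ A, single i 1 ≤ m + ∑ i ∈ B, single i 1 ↔ ∑ i ∈ A \ B, single i 1 ≤ m := by
  simp only [le_def, add_apply, finset_sum_single_one_apply, Finset.mem_sdiff]
  refine forall_congr' fun j => ?_
  by_cases hA : j ∈ A <;> by_cases hB : j ∈ B <;> simp [hA, hB]

end Finsupp

namespace MvPolynomial

variable {σ R : Type*} [CommSemiring R]

theorem mem_colon_span_monomial_iff {S : Set (σ →₀ ℕ)} {s : σ →₀ ℕ} {g : MvPolynomial σ R} :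
    g ∈ (Ideal.span ((fun u => monomial u (1 : R)) '' S)).colon (Ideal.span {monomial s (1 : R)}) ↔
      ∀ m ∈ g.support, ∃ u ∈ S, u ≤ m + s := by
  rw [Ideal.mem_colon_span_singleton, mem_ideal_span_monomial_image]
  constructor
  · intro h m hm
    apply h
    rw [mem_support_iff, coeff_mul_monomial, mul_one]
    exact mem_support_iff.mp hm
  · intro h m hm
    rw [mem_support_iff, coeff_mul_monomial'] at hm
    split_ifs at hm with hsm
    · rw [← tsub_add_cancel_of_le hsm]
      exact h _ (mem_support_iff.mpr (by simpa using hm))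
    · exact absurd rfl hm

theorem prod_X_eq_monomial_sum_single (A : Finset σ) :
    ∏ i ∈ A, (X i : MvPolynomial σ R) = monomial (∑ i ∈ A, single i 1) 1 :=
  (monomial_sum_one A _).symm

theorem colon_span_prod_X_eq_span_prod_X [DecidableEq σ] {𝒜 : Set (Finset σ)} {B C : Finset σ}
    (hC : IsLeast ((· \ B) '' 𝒜) C) :
    (Ideal.span ((fun A => ∏ i ∈ A, (X i : MvPolynomial σ R)) '' 𝒜)).colon
        (Ideal.span {∏ i ∈ B, (X i : MvPolynomial σ R)}) = Ideal.span {∏ i ∈ C, X i} := by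
  have hexp : ∀ 𝒮 : Set (Finset σ), (fun A => ∏ i ∈ A, (X i : MvPolynomial σ R)) '' 𝒮 =
      (fun u => monomial u 1) '' ((fun A => ∑ i ∈ A, single i 1) '' 𝒮) := by
    intro 𝒮
    simp only [Set.image_image, prod_X_eq_monomial_sum_single]
  ext g
  rw [hexp, prod_X_eq_monomial_sum_single, prod_X_eq_monomial_sum_single,
    mem_colon_span_monomial_iff, ← Set.image_singleton (f := fun u => monomial u (1 : R)),
    mem_ideal_span_monomial_image]
  refine forall₂_congr fun m _ => ?_
  simp only [Set.exists_mem_image, Set.mem_singleton_iff, exists_eq_left,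
    finset_sum_single_one_le_add_iff]
  constructor
  · rintro ⟨A, hA, hle⟩
    exact (Finset.sum_le_sum_of_subset (hC.2 ⟨A, hA, rfl⟩)).trans hle
  · obtain ⟨A, hA, rfl⟩ := hC.1
    exact fun hle => ⟨A, hA, hle⟩

end MvPolynomial

/-- For `f₁ = x₁x₂x₃x₄x₅x₆`, `f₂ = x₁x₂x₃x₄x₇x₈x₉`, `f₃ = x₃x₄x₅x₆x₇`,
`f₄ = x₅x₆x₇x₈` in `K[x₁,…,x₉]`, the successive colon ideals are
`(f₁) : f₂ = (x₅x₆)`, `(f₁,f₂) : f₃ = (x₁x₂)`, `(f₁,f₂,f₃) : f₄ = (x₃x₄)`;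
each is generated by a single monomial of degree 2. -/
theorem stmt_12 {K : Type} [Field K] :
    let x : Fin 9 → MvPolynomial (Fin 9) K := fun i => X i
    let f₁ := x 0 * x 1 * x 2 * x 3 * x 4 * x 5
    let f₂ := x 0 * x 1 * x 2 * x 3 * x 6 * x 7 * x 8
    let f₃ := x 2 * x 3 * x 4 * x 5 * x 6
    let f₄ := x 4 * x 5 * x 6 * x 7
    (Ideal.span {f₁}).colon (Ideal.span {f₂}) = Ideal.span {x 4 * x 5} ∧
    (Ideal.span {f₁, f₂}).colon (Ideal.span {f₃}) = Ideal.span {x 0 * x 1} ∧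
    (Ideal.span {f₁, f₂, f₃}).colon (Ideal.span {f₄}) = Ideal.span {x 2 * x 3} ∧
    (x 4 * x 5).totalDegree = 2 ∧ (x 0 * x 1).totalDegree = 2 ∧
    (x 2 * x 3).totalDegree = 2 := by
  intro x f₁ f₂ f₃ f₄
  have deg (i j : Fin 9) : (x i * x j).totalDegree = 2 := by
    rw [totalDegree_mul_of_isDomain (X_ne_zero _) (X_ne_zero _), totalDegree_X, totalDegree_X]
  refine ⟨?_, ?_, ?_, deg 4 5, deg 0 1, deg 2 3⟩
  · have h := colon_span_prod_X_eq_span_prod_X (σ := Fin 9) (R := K) (𝒜 := {{0, 1, 2, 3, 4, 5}})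
      (B := {0, 1, 2, 3, 6, 7, 8}) (C := {4, 5}) (by
        simp only [Set.image_singleton, IsLeast, lowerBounds_singleton]
        decide)
    simpa [x, f₁, f₂, mul_assoc] using h
  · have h := colon_span_prod_X_eq_span_prod_X (σ := Fin 9) (R := K)
      (𝒜 := {{0, 1, 2, 3, 4, 5}, {0, 1, 2, 3, 6, 7, 8}})
      (B := {2, 3, 4, 5, 6}) (C := {0, 1}) (by
        simp only [Set.image_insert_eq, Set.image_singleton, IsLeast, lowerBounds_insert,
          lowerBounds_singleton]
        decide)
    simpa [x, f₁, f₂, f₃, mul_assoc, Set.image_insert_eq] using h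
  · have h := colon_span_prod_X_eq_span_prod_X (σ := Fin 9) (R := K)
      (𝒜 := {{0, 1, 2, 3, 4, 5}, {0, 1, 2, 3, 6, 7, 8}, {2, 3, 4, 5, 6}})
      (B := {4, 5, 6, 7}) (C := {2, 3}) (by
        simp only [Set.image_insert_eq, Set.image_singleton, IsLeast, lowerBounds_insert,
          lowerBounds_singleton]
        decide)
    simpa [x, f₁, f₂, f₃, f₄, mul_assoc, Set.image_insert_eq] using h
end

section
/- Let a₂ ≤ a₃ ≤ ⋯ ≤ a_m be an increasing sequence of positive integers. Then there exist squarefree monomials f₁,…,f_m in some polynomial ring such that deg(f₁) ≤ ⋯ ≤ deg(f_m) and for each k = 2,…,m, the colon ideal (f₁,…,f_{k-1}) : f_k is generated by a regular sequence of monomials each of degree a_k. -/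
/-!
Take for `S k` the window `[p k, p k + P)` of fixed length `P`, where `p` are the partial sums
of `a` and `P` is their total. For squarefree monomials `(x^A) : x^B = (x^(A \ B))`, and for
`l < k` the difference `S l \ S k = [p l, p k)` contains `[p (k - 1), p k)`, which has `a k`
elements and is attained at `l = k - 1`. So every colon ideal is principal, generated by a single
monomial of degree `a k`.
-/

open MvPolynomial

/-- `L` is generated by a regular sequence of `r` monomials whose degrees are given by `a`
(a sequence of monomials is regular iff the supports are pairwise disjoint and each is
nonconstant). -/
def IsRegSeqSpan {K : Type} [Field K] {σ : Type} (L : Ideal (MvPolynomial σ K))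
    (r : ℕ) (a : Fin r → ℕ) : Prop :=
  ∃ α : Fin r → (σ →₀ ℕ),
    (∀ t, (α t).support.Nonempty) ∧
    (∀ s t, s ≠ t → Disjoint (α s).support (α t).support) ∧
    (∀ t, (monomial (α t) (1 : K)).totalDegree = a t) ∧
    L = Ideal.span (Set.range fun t => monomial (α t) (1 : K))

namespace Finset
variable {σ : Type*} [DecidableEq σ]

theorem toFinsupp_val_eq_sum_single (T : Finset σ) :
    Multiset.toFinsupp T.val = ∑ x ∈ T, Finsupp.single x 1 := by
  ext x
  simp [Multiset.toFinsupp_apply, Finsupp.finsetSum_apply, Finsupp.single_apply,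
    Multiset.count_eq_of_nodup T.nodup]

theorem toFinsupp_val_sub (S T : Finset σ) :
    Multiset.toFinsupp S.val - Multiset.toFinsupp T.val = Multiset.toFinsupp (S \ T).val := by
  ext x
  simp [Multiset.toFinsupp_apply, sdiff_val, Multiset.count_sub]

theorem toFinsupp_val_le_iff {S T : Finset σ} :
    Multiset.toFinsupp S.val ≤ Multiset.toFinsupp T.val ↔ S ⊆ T :=
  Finsupp.orderIsoMultiset.symm.le_iff_le.trans val_le_iff

end Finset

namespace MvPolynomial
variable {R σ : Type*} [CommSemiring R]

theorem support_mul_monomial_one (p : MvPolynomial σ R) (e : σ →₀ ℕ) :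
    (p * monomial e 1).support = p.support.map (addRightEmbedding e) :=
  AddMonoidAlgebra.support_coeff_mul_single p _ (by simp) _

theorem colon_span_monomial_image (s : Set (σ →₀ ℕ)) (e : σ →₀ ℕ) :
    (Ideal.span ((fun d => monomial d (1 : R)) '' s)).colon (Ideal.span {monomial e (1 : R)}) =
      Ideal.span ((fun d => monomial d (1 : R)) '' ((· - e) '' s)) := by
  ext g
  simp only [Ideal.mem_colon_span_singleton, mem_ideal_span_monomial_image,
    support_mul_monomial_one, Finset.mem_map, addRightEmbedding_apply, Set.exists_mem_image,
    tsub_le_iff_right, forall_exists_index, and_imp, forall_apply_eq_imp_iff₂]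

theorem span_monomial_image_eq_span_singleton {s : Set (σ →₀ ℕ)} {d₀ : σ →₀ ℕ}
    (h : IsLeast s d₀) :
    Ideal.span ((fun d => monomial d (1 : R)) '' s) = Ideal.span {monomial d₀ 1} := by
  ext g
  rw [← Set.image_singleton (f := fun d => monomial d (1 : R)), mem_ideal_span_monomial_image,
    mem_ideal_span_monomial_image]
  refine forall₂_congr fun c _ => ⟨fun ⟨d, hd, hdc⟩ => ⟨d₀, rfl, (h.2 hd).trans hdc⟩, ?_⟩
  rintro ⟨d, rfl, hc⟩
  exact ⟨_, h.1, hc⟩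

variable [DecidableEq σ]

theorem prod_X_eq_monomial_toFinsupp (T : Finset σ) :
    ∏ x ∈ T, (X x : MvPolynomial σ R) = monomial (Multiset.toFinsupp T.val) 1 := by
  rw [T.toFinsupp_val_eq_sum_single, monomial_sum_one]
  rfl

theorem colon_span_prod_X_image {ι : Type*} {S : ι → Finset σ} {I : Set ι} {T U : Finset σ}
    (hU : IsLeast ((fun i => S i \ T) '' I) U) :
    (Ideal.span ((fun i => ∏ x ∈ S i, (X x : MvPolynomial σ R)) '' I)).colon
        (Ideal.span {∏ x ∈ T, (X x : MvPolynomial σ R)}) =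
      Ideal.span {∏ x ∈ U, (X x : MvPolynomial σ R)} := by
  have hmono : Monotone fun V : Finset σ => Multiset.toFinsupp V.val :=
    fun _ _ h => Finset.toFinsupp_val_le_iff.2 h
  have hleast := hmono.map_isLeast hU
  rw [Set.image_image] at hleast
  have himage : (fun i => ∏ x ∈ S i, (X x : MvPolynomial σ R)) '' I =
      (fun d => monomial d 1) '' ((fun i => Multiset.toFinsupp (S i).val) '' I) := by
    simp only [Set.image_image, prod_X_eq_monomial_toFinsupp]
  rw [himage, prod_X_eq_monomial_toFinsupp, prod_X_eq_monomial_toFinsupp,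
    colon_span_monomial_image, Set.image_image (· - Multiset.toFinsupp T.val)]
  simp_rw [Finset.toFinsupp_val_sub]
  exact span_monomial_image_eq_span_singleton hleast

end MvPolynomial

theorem isRegSeqSpan_span_prod_X {K σ : Type} [Field K] {U : Finset σ} (hU : U.Nonempty) :
    IsRegSeqSpan (Ideal.span {∏ x ∈ U, (X x : MvPolynomial σ K)}) 1 (fun _ => U.card) := by
  classical
  refine ⟨fun _ => Multiset.toFinsupp U.val, fun _ => by simpa using hU,
    fun s t h => (h (Subsingleton.elim s t)).elim, fun _ => ?_, ?_⟩
  · rw [totalDegree_monomial _ one_ne_zero]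
    exact Multiset.toFinsupp_sum_eq _
  · rw [Set.range_const, prod_X_eq_monomial_toFinsupp]

theorem exists_finsets_isLeast_sdiff {m : ℕ} (a : Fin m → ℕ) :
    ∃ (n : ℕ) (S : Fin m → Finset (Fin n)), (∀ k l, k ≤ l → (S k).card ≤ (S l).card) ∧
      ∀ k : Fin m, 0 < (k : ℕ) →
        ∃ U, IsLeast ((fun l => S l \ S k) '' {l | (l : ℕ) < k}) U ∧ U.card = a k := by
  set p : ℕ → ℕ := fun j => ∑ i ∈ Finset.range (j + 1), if h : i < m then a ⟨i, h⟩ else 0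
  have hp : Monotone p := fun i j hij =>
    Finset.sum_le_sum_of_subset (Finset.range_subset_range.2 (by omega))
  have hp_succ (k : Fin m) (hk : 0 < (k : ℕ)) : p k = p (k - 1) + a k := by
    simp only [p, Nat.sub_add_cancel hk, Finset.sum_range_succ _ (k : ℕ), dif_pos k.isLt]
  have hpP (k : Fin m) : p k ≤ p m := hp k.isLt.le
  have hS (k : Fin m) : ∀ x ∈ Finset.Ico (p k) (p k + p m), x < p m + p m :=
    fun x hx => (Finset.mem_Ico.1 hx).2.trans_le (by have := hpP k; omega)
  refine ⟨p m + p m, fun k => (Finset.Ico (p k) (p k + p m)).attachFin (hS k),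
    fun k l _ => by simp, fun k hk => ?_⟩
  have hU : ∀ x ∈ Finset.Ico (p (k - 1)) (p k), x < p m + p m :=
    fun x hx => (Finset.mem_Ico.1 hx).2.trans_le (by have := hpP k; omega)
  refine ⟨(Finset.Ico (p (k - 1)) (p k)).attachFin hU,
    ⟨⟨⟨k - 1, by omega⟩, show (k : ℕ) - 1 < k by omega, ?_⟩, ?_⟩, by simp [hp_succ k hk]⟩
  · ext x
    have := hpP k
    have := hp_succ k hk
    simp only [Finset.mem_sdiff, Finset.mem_attachFin, Finset.mem_Ico, not_and, not_lt]
    omega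
  · rintro _ ⟨l, hl, rfl⟩ x
    have := hp (Nat.le_sub_one_of_lt hl)
    have := hpP k
    simp only [Finset.mem_attachFin, Finset.mem_Ico, Finset.mem_sdiff, not_and, not_lt, and_imp]
    omega

theorem stmt_13_general {K : Type} [Field K] {m : ℕ} (a : Fin m → ℕ)
    (hapos : ∀ k : Fin m, 0 < (k : ℕ) → 0 < a k) :
    ∃ (n : ℕ) (S : Fin m → Finset (Fin n)),
      (∀ k l : Fin m, k ≤ l → (S k).card ≤ (S l).card) ∧
      ∀ k : Fin m, 0 < (k : ℕ) →
        ∃ r : ℕ, IsRegSeqSpan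
          ((Ideal.span ((fun l : Fin m => ((S l).prod fun x => (X x : MvPolynomial (Fin n) K)))
              '' {l : Fin m | (l : ℕ) < (k : ℕ)})).colon
            (Ideal.span {(S k).prod fun x => (X x : MvPolynomial (Fin n) K)}))
          r (fun _ => a k) := by
  obtain ⟨n, S, hcard, hleast⟩ := exists_finsets_isLeast_sdiff a
  refine ⟨n, S, hcard, fun k hk => ⟨1, ?_⟩⟩
  obtain ⟨U, hU, hUcard⟩ := hleast k hk
  rw [colon_span_prod_X_image hU, ← hUcard]
  exact isRegSeqSpan_span_prod_X (Finset.card_pos.1 (hUcard ▸ hapos k hk))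

/-- For an increasing sequence of positive integers `a₂ ≤ ⋯ ≤ a_m` there are squarefree
monomials `f₁,…,f_m` (in some polynomial ring) with nondecreasing degrees such that each
colon ideal `(f₁,…,f_{k-1}) : f_k` is generated by a regular sequence of monomials of
degree `a_k`. -/
theorem stmt_13 {K : Type} [Field K] {m : ℕ} (hm : 0 < m) (a : Fin m → ℕ)
    (hapos : ∀ k : Fin m, 0 < (k : ℕ) → 0 < a k)
    (hmono : ∀ k l : Fin m, 0 < (k : ℕ) → k ≤ l → a k ≤ a l) :
    ∃ (n : ℕ) (S : Fin m → Finset (Fin n)),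
      (∀ k l : Fin m, k ≤ l → (S k).card ≤ (S l).card) ∧
      ∀ k : Fin m, 0 < (k : ℕ) →
        ∃ r : ℕ, IsRegSeqSpan
          ((Ideal.span ((fun l : Fin m => ((S l).prod fun x => (X x : MvPolynomial (Fin n) K)))
              '' {l : Fin m | (l : ℕ) < (k : ℕ)})).colon
            (Ideal.span {(S k).prod fun x => (X x : MvPolynomial (Fin n) K)}))
          r (fun _ => a k) :=
  stmt_13_general a hapos
end

section
/- Fix integers h ≥ 2 and ℓ_j ≥ 1 and variables e_{i,j} for 1 ≤ i ≤ 2ℓ_j, 1 ≤ j ≤ h. For 1 ≤ i < j ≤ h let u_{i,j} = (e_{1,i}e_{3,i}⋯e_{2ℓ_i−1,i})·(e_{2,j}e_{4,j}⋯e_{2ℓ_j,j}). Order the monomials u_{i,j} as m₁ = u_{h−1,h}, m₂ = u_{h−2,h}, m₃ = u_{h−2,h−1}, …, m_{h(h−1)/2} = u_{1,2} (i.e., decreasing in the first index, and within equal first index decreasing in the second index). Then for each k with 2 ≤ k ≤ h(h−1)/2, the colon ideal (m₁,…,m_{k−1}) : m_k is generated by a regular sequence of monomials, and if m_{k−1}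 = u_{i,j}, the length of this regular sequence is h−i−1 when j−i ≥ 2 and h−i when j−i = 1; thus the lengths form the sequence (1,1, 2,2,2, …, h−2,…,h−2). -/
open MvPolynomial

/-- `L` is generated by a regular sequence of `r` monomials (a sequence of monomials is
regular iff the supports are pairwise disjoint and each is nonconstant). -/
def IsRegSeqSpanLen {K : Type} [Field K] {σ : Type} (L : Ideal (MvPolynomial σ K))
    (r : ℕ) : Prop :=
  ∃ α : Fin r → (σ →₀ ℕ),
    (∀ t, (α t).support.Nonempty) ∧
    (∀ s t, s ≠ t → Disjoint (α s).support (α t).support) ∧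
    L = Ideal.span (Set.range fun t => monomial (α t) (1 : K))

noncomputable section StmtAux14

/-- Exponent of `Y1`. -/
def Aex (ℓ : ℕ → ℕ) (p : ℕ) : (ℕ × ℕ) →₀ ℕ :=
  ∑ k ∈ Finset.range (ℓ p), Finsupp.single (2 * k + 1, p) 1

/-- Exponent of `Y2`. -/
def Bex (ℓ : ℕ → ℕ) (q : ℕ) : (ℕ × ℕ) →₀ ℕ :=
  ∑ k ∈ Finset.range (ℓ q), Finsupp.single (2 * k + 2, q) 1

lemma Aex_eq_zero {ℓ : ℕ → ℕ} {p : ℕ} {x : ℕ × ℕ} (hx : x.2 ≠ p ∨ x.1 % 2 = 0) :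
    Aex ℓ p x = 0 := by
  rw [Aex, Finsupp.finset_sum_apply]
  refine Finset.sum_eq_zero fun k _ => ?_
  rw [Finsupp.single_apply, if_neg]
  rintro rfl
  simp only [Nat.add_mod_left] at hx
  omega

lemma Bex_eq_zero {ℓ : ℕ → ℕ} {q : ℕ} {x : ℕ × ℕ} (hx : x.2 ≠ q ∨ x.1 % 2 = 1) :
    Bex ℓ q x = 0 := by
  rw [Bex, Finsupp.finset_sum_apply]
  refine Finset.sum_eq_zero fun k _ => ?_
  rw [Finsupp.single_apply, if_neg]
  rintro rfl
  simp only at hx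
  omega

lemma Aex_one {ℓ : ℕ → ℕ} {p : ℕ} (hp : 1 ≤ ℓ p) : Aex ℓ p (1, p) = 1 := by
  rw [Aex, Finsupp.finset_sum_apply]
  have : ∀ k ∈ Finset.range (ℓ p),
      (Finsupp.single (2 * k + 1, p) (1:ℕ)) (1, p) = if k = 0 then 1 else 0 := by
    intro k _
    rw [Finsupp.single_apply]
    by_cases hk : k = 0 <;> simp [hk, Prod.ext_iff]
  rw [Finset.sum_congr rfl this, Finset.sum_ite_eq' (Finset.range (ℓ p)) 0 (fun _ => 1),
    if_pos (Finset.mem_range.2 hp)]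

lemma Bex_one {ℓ : ℕ → ℕ} {q : ℕ} (hq : 1 ≤ ℓ q) : Bex ℓ q (2, q) = 1 := by
  rw [Bex, Finsupp.finset_sum_apply]
  have : ∀ k ∈ Finset.range (ℓ q),
      (Finsupp.single (2 * k + 2, q) (1:ℕ)) (2, q) = if k = 0 then 1 else 0 := by
    intro k _
    rw [Finsupp.single_apply]
    by_cases hk : k = 0 <;> simp [hk, Prod.ext_iff]
  rw [Finset.sum_congr rfl this, Finset.sum_ite_eq' (Finset.range (ℓ q)) 0 (fun _ => 1),
    if_pos (Finset.mem_range.2 hq)]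

lemma Aex_support_nonempty {ℓ : ℕ → ℕ} {p : ℕ} (hp : 1 ≤ ℓ p) :
    (Aex ℓ p).support.Nonempty :=
  ⟨(1, p), Finsupp.mem_support_iff.2 (by rw [Aex_one hp]; exact one_ne_zero)⟩

lemma Bex_support_nonempty {ℓ : ℕ → ℕ} {q : ℕ} (hq : 1 ≤ ℓ q) :
    (Bex ℓ q).support.Nonempty :=
  ⟨(2, q), Finsupp.mem_support_iff.2 (by rw [Bex_one hq]; exact one_ne_zero)⟩

lemma odd_of_Aex {ℓ : ℕ → ℕ} {p : ℕ} {x : ℕ × ℕ} (hx : Aex ℓ p x ≠ 0) :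
    x.2 = p ∧ x.1 % 2 = 1 := by
  by_contra hc
  rcases Decidable.not_and_iff_or_not.mp hc with h | h
  · exact hx (Aex_eq_zero (Or.inl h))
  · exact hx (Aex_eq_zero (Or.inr (by omega)))

lemma even_of_Bex {ℓ : ℕ → ℕ} {q : ℕ} {x : ℕ × ℕ} (hx : Bex ℓ q x ≠ 0) :
    x.2 = q ∧ x.1 % 2 = 0 := by
  by_contra hc
  rcases Decidable.not_and_iff_or_not.mp hc with h | h
  · exact hx (Bex_eq_zero (Or.inl h))
  · exact hx (Bex_eq_zero (Or.inr (by omega)))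

lemma disjAA {ℓ : ℕ → ℕ} {p p' : ℕ} (hpp : p ≠ p') :
    Disjoint (Aex ℓ p).support (Aex ℓ p').support := by
  rw [Finset.disjoint_left]
  intro x hx hx'
  rw [Finsupp.mem_support_iff] at hx hx'
  have h1 := odd_of_Aex hx
  have h2 := odd_of_Aex hx'
  exact hpp (h1.1 ▸ h2.1 ▸ rfl)

lemma disjAB {ℓ : ℕ → ℕ} {p q : ℕ} :
    Disjoint (Aex ℓ p).support (Bex ℓ q).support := by
  rw [Finset.disjoint_left]
  intro x hx hx'
  rw [Finsupp.mem_support_iff] at hx hx'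
  have h1 := odd_of_Aex hx
  have h2 := even_of_Bex hx'
  omega

lemma disjBB {ℓ : ℕ → ℕ} {q q' : ℕ} (hqq : q ≠ q') :
    Disjoint (Bex ℓ q).support (Bex ℓ q').support := by
  rw [Finset.disjoint_left]
  intro x hx hx'
  rw [Finsupp.mem_support_iff] at hx hx'
  have h1 := even_of_Bex hx
  have h2 := even_of_Bex hx'
  exact hqq (h1.1 ▸ h2.1 ▸ rfl)

lemma prod_X_eq {K : Type} [Field K] {ι : Type} (s : Finset ι) (g : ι → ℕ × ℕ) :
    (∏ p ∈ s, (X (g p) : MvPolynomial (ℕ × ℕ) K)) =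
      monomial (∑ p ∈ s, Finsupp.single (g p) 1) 1 := by
  classical
  induction s using Finset.cons_induction with
  | empty => simp
  | cons a s ha ih =>
    rw [Finset.prod_cons, Finset.sum_cons, ih, X, monomial_mul, one_mul]

lemma le_of_le_add' {a b d : (ℕ × ℕ) →₀ ℕ} (hdisj : ∀ x, a x ≠ 0 → b x = 0)
    (h : a ≤ d + b) : a ≤ d := by
  intro x
  have h1 := h x
  by_cases hx : a x = 0
  · simp [hx]
  · have := hdisj x hx
    simp only [Finsupp.add_apply] at h1 ⊢
    omega

lemma Aex_le_cancel {ℓ : ℕ → ℕ} {d : (ℕ × ℕ) →₀ ℕ} {p i' j' : ℕ} (hpi : p ≠ i')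
    (h : Aex ℓ p ≤ d + (Aex ℓ i' + Bex ℓ j')) : Aex ℓ p ≤ d := by
  refine le_of_le_add' (fun x hx => ?_) h
  obtain ⟨hcol, hpar⟩ := odd_of_Aex hx
  simp only [Finsupp.add_apply,
    Aex_eq_zero (Or.inl (show x.2 ≠ i' by rw [hcol]; exact hpi)),
    Bex_eq_zero (Or.inr hpar)]

lemma Bex_le_cancel {ℓ : ℕ → ℕ} {d : (ℕ × ℕ) →₀ ℕ} {q i' j' : ℕ} (hqj : q ≠ j')
    (h : Bex ℓ q ≤ d + (Aex ℓ i' + Bex ℓ j')) : Bex ℓ q ≤ d := by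
  refine le_of_le_add' (fun x hx => ?_) h
  obtain ⟨hcol, hpar⟩ := even_of_Bex hx
  simp only [Finsupp.add_apply, Aex_eq_zero (Or.inr hpar),
    Bex_eq_zero (Or.inl (show x.2 ≠ j' by rw [hcol]; exact hqj))]

lemma supp_mul_mono' {K : Type} [Field K] (μ : (ℕ × ℕ) →₀ ℕ) (f : MvPolynomial (ℕ × ℕ) K) :
    (f * monomial μ (1:K)).support = f.support.map (addRightEmbedding μ) := by
  classical
  rw [← single_eq_monomial]
  exact AddMonoidAlgebra.support_coeff_mul_single f (1:K) (by simp) μ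

lemma colon_span_eq {K : Type} [Field K] (S : Set ((ℕ × ℕ) →₀ ℕ)) (μ : (ℕ × ℕ) →₀ ℕ)
    {r : ℕ} (α : Fin r → ((ℕ × ℕ) →₀ ℕ))
    (hkey : ∀ d, (∃ s ∈ S, s ≤ d + μ) ↔ ∃ t, α t ≤ d) :
    (Ideal.span ((fun s => monomial s (1:K)) '' S)).colon
        (Ideal.span {monomial μ (1:K)}) =
      Ideal.span (Set.range fun t => monomial (α t) (1:K)) := by
  ext f
  rw [Ideal.mem_colon_span_singleton]
  have hr : Set.range (fun t => monomial (α t) (1:K)) =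
      (fun s => monomial s (1:K)) '' Set.range α := by
    rw [← Set.range_comp]; rfl
  rw [hr, mem_ideal_span_monomial_image, mem_ideal_span_monomial_image, supp_mul_mono']
  rw [Finset.forall_mem_map]
  simp only [addRightEmbedding_apply]
  constructor
  · intro H d hd
    obtain ⟨t, ht⟩ := (hkey d).1 (H d hd)
    exact ⟨α t, Set.mem_range_self t, ht⟩
  · intro H d hd
    obtain ⟨s, ⟨t, rfl⟩, hs⟩ := H d hd
    exact (hkey d).2 ⟨t, hs⟩

end StmtAux14

/-- Regular quotients for the initial ideal of the toric ideal of the bipartite graph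
`B_{ℓ̲,h}` (in the ambient polynomial ring on the variables `e_{i,j}`, indexed by `ℕ × ℕ`):
`Y_{1,i} = e_{1,i}e_{3,i}⋯e_{2ℓ_i−1,i}`, `Y_{2,j} = e_{2,j}e_{4,j}⋯e_{2ℓ_j,j}`,
`u_{i,j} = Y_{1,i}Y_{2,j}`, the `u`'s ordered decreasingly in the first and then the second
index.  For each generator `u_{i,j}` which has a successor `m_k`, the colon ideal of the
ideal generated by `u_{i,j}` and its predecessors by the successor `m_k` is generated by a
regular sequence of monomials of length `h−i−1` if `j−i ≥ 2` and `h−i` if `j−i = 1`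
(the successor of `u_{i,j}` being `u_{i,j-1}` if `j > i+1`, and `u_{i-1,h}` otherwise). -/
theorem stmt_14 {K : Type} [Field K] (h : ℕ) (hh : 2 ≤ h) (ℓ : ℕ → ℕ)
    (hℓ : ∀ j, 1 ≤ j → j ≤ h → 1 ≤ ℓ j)
    (e : ℕ → ℕ → MvPolynomial (ℕ × ℕ) K) (he : ∀ i j, e i j = X (i, j))
    (Y1 Y2 : ℕ → MvPolynomial (ℕ × ℕ) K)
    (hY1 : ∀ i, Y1 i = ∏ p ∈ Finset.range (ℓ i), e (2 * p + 1) i)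
    (hY2 : ∀ j, Y2 j = ∏ p ∈ Finset.range (ℓ j), e (2 * p + 2) j)
    (u : ℕ → ℕ → MvPolynomial (ℕ × ℕ) K) (hu : ∀ i j, u i j = Y1 i * Y2 j)
    (i j : ℕ) (hi : 1 ≤ i) (hij : i < j) (hj : j ≤ h) (hnotlast : ¬(i = 1 ∧ j = 2)) :
    IsRegSeqSpanLen
      ((Ideal.span {x | ∃ p q, 1 ≤ p ∧ p < q ∧ q ≤ h ∧ (i < p ∨ (p = i ∧ j ≤ q)) ∧
          x = u p q}).colon
        (Ideal.span {if i + 1 < j then u i (j - 1) else u (i - 1) h}))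
      (if i + 2 ≤ j then h - i - 1 else h - i) := by
  classical
  have hAe : ∀ p, Y1 p = monomial (Aex ℓ p) (1:K) := by
    intro p
    rw [hY1]
    simp only [he]
    rw [prod_X_eq]
    rfl
  have hBe : ∀ q, Y2 q = monomial (Bex ℓ q) (1:K) := by
    intro q
    rw [hY2]
    simp only [he]
    rw [prod_X_eq]
    rfl
  have hum : ∀ p q, u p q = monomial (Aex ℓ p + Bex ℓ q) (1:K) := by
    intro p q
    rw [hu, hAe, hBe, monomial_mul, one_mul]
  have hset : {x | ∃ p q, 1 ≤ p ∧ p < q ∧ q ≤ h ∧ (i < p ∨ (p = i ∧ j ≤ q)) ∧ x = u p q}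
      = (fun s => monomial s (1:K)) ''
        {s | ∃ p q, 1 ≤ p ∧ p < q ∧ q ≤ h ∧ (i < p ∨ (p = i ∧ j ≤ q)) ∧
          s = Aex ℓ p + Bex ℓ q} := by
    ext x
    constructor
    · rintro ⟨p, q, h1, h2, h3, h4, rfl⟩
      exact ⟨Aex ℓ p + Bex ℓ q, ⟨p, q, h1, h2, h3, h4, rfl⟩, (hum p q).symm⟩
    · rintro ⟨s, ⟨p, q, h1, h2, h3, h4, rfl⟩, rfl⟩
      exact ⟨p, q, h1, h2, h3, h4, (hum p q).symm⟩
  by_cases hc : i + 1 < j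
  · -- case j ≥ i + 2
    rw [if_pos hc, if_pos (show i + 2 ≤ j from hc), hum i (j - 1), hset]
    refine ⟨fun t => if t.val + j ≤ h then Bex ℓ (j + t.val)
      else Aex ℓ (t.val + i + j - h), ?_, ?_, ?_⟩
    · intro t
      dsimp only
      have hlt := t.isLt
      by_cases htj : t.val + j ≤ h
      · rw [if_pos htj]
        exact Bex_support_nonempty (hℓ _ (by omega) (by omega))
      · rw [if_neg htj]
        exact Aex_support_nonempty (hℓ _ (by omega) (by omega))
    · intro s t hst
      dsimp only
      have hs' : s.val ≠ t.val := fun hh => hst (Fin.ext hh)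
      have hls := s.isLt
      have hlt := t.isLt
      by_cases hsj : s.val + j ≤ h <;> by_cases htj : t.val + j ≤ h
      · rw [if_pos hsj, if_pos htj]
        exact disjBB (by omega)
      · rw [if_pos hsj, if_neg htj]
        exact disjAB.symm
      · rw [if_neg hsj, if_pos htj]
        exact disjAB
      · rw [if_neg hsj, if_neg htj]
        exact disjAA (by omega)
    · refine colon_span_eq _ _ _ fun d => ⟨?_, ?_⟩
      · rintro ⟨s, ⟨p, q, h1, h2, h3, h4, rfl⟩, hle⟩
        rcases h4 with hp | ⟨hpi, hq⟩
        · by_cases hpj : p + 2 ≤ j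
          · have hA : Aex ℓ p ≤ d := Aex_le_cancel (by omega) (le_trans le_self_add hle)
            refine ⟨⟨p + h - i - j, by omega⟩, ?_⟩
            show (if p + h - i - j + j ≤ h then Bex ℓ (j + (p + h - i - j))
              else Aex ℓ (p + h - i - j + i + j - h)) ≤ d
            rw [if_neg (by omega)]
            have e1 : p + h - i - j + i + j - h = p := by omega
            rw [e1]
            exact hA
          · have hq : j ≤ q := by omega
            have hB : Bex ℓ q ≤ d := Bex_le_cancel (by omega) (le_trans le_add_self hle)
            refine ⟨⟨q - j, by omega⟩, ?_⟩
            show (if q - j + j ≤ h then Bex ℓ (j + (q - j))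
              else Aex ℓ (q - j + i + j - h)) ≤ d
            rw [if_pos (by omega)]
            have e1 : j + (q - j) = q := by omega
            rw [e1]
            exact hB
        · have hB : Bex ℓ q ≤ d := Bex_le_cancel (by omega) (le_trans le_add_self hle)
          refine ⟨⟨q - j, by omega⟩, ?_⟩
          show (if q - j + j ≤ h then Bex ℓ (j + (q - j))
            else Aex ℓ (q - j + i + j - h)) ≤ d
          rw [if_pos (by omega)]
          have e1 : j + (q - j) = q := by omega
          rw [e1]
          exact hB
      · rintro ⟨t, ht⟩
        have hlt := t.isLt
        by_cases htj : t.val + j ≤ h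
        · rw [if_pos htj] at ht
          refine ⟨Aex ℓ i + Bex ℓ (j + t.val),
            ⟨i, j + t.val, hi, by omega, by omega, Or.inr ⟨rfl, by omega⟩, rfl⟩, ?_⟩
          calc Aex ℓ i + Bex ℓ (j + t.val) = Bex ℓ (j + t.val) + Aex ℓ i := add_comm _ _
            _ ≤ d + (Aex ℓ i + Bex ℓ (j - 1)) := add_le_add ht le_self_add
        · rw [if_neg htj] at ht
          exact ⟨Aex ℓ (t.val + i + j - h) + Bex ℓ (j - 1),
            ⟨t.val + i + j - h, j - 1, by omega, by omega, by omega,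
              Or.inl (by omega), rfl⟩, add_le_add ht le_add_self⟩
  · -- case j = i + 1
    have hji : j = i + 1 := by omega
    have hi2 : 2 ≤ i := by
      by_contra hx
      exact hnotlast ⟨by omega, by omega⟩
    rw [if_neg hc, if_neg (show ¬ i + 2 ≤ j by omega), hum (i - 1) h, hset]
    refine ⟨fun t => Aex ℓ (i + t.val), ?_, ?_, ?_⟩
    · intro t
      have hlt := t.isLt
      exact Aex_support_nonempty (hℓ _ (by omega) (by omega))
    · intro s t hst
      exact disjAA fun he2 => hst (Fin.ext (by omega))
    · refine colon_span_eq _ _ _ fun d => ⟨?_, ?_⟩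
      · rintro ⟨s, ⟨p, q, h1, h2, h3, h4, rfl⟩, hle⟩
        have hip : i ≤ p := by rcases h4 with h' | ⟨rfl, _⟩ <;> omega
        have hA : Aex ℓ p ≤ d := Aex_le_cancel (by omega) (le_trans le_self_add hle)
        refine ⟨⟨p - i, by omega⟩, ?_⟩
        show Aex ℓ (i + (p - i)) ≤ d
        have e1 : i + (p - i) = p := by omega
        rw [e1]
        exact hA
      · rintro ⟨t, ht⟩
        have hlt := t.isLt
        refine ⟨Aex ℓ (i + t.val) + Bex ℓ h,
          ⟨i + t.val, h, by omega, by omega, le_refl h, ?_, rfl⟩,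
          add_le_add ht le_add_self⟩
        rcases Nat.eq_zero_or_pos t.val with h0 | h0
        · exact Or.inr ⟨by omega, by omega⟩
        · exact Or.inl (by omega)
end

section
/- Let h ≥ 2 and ℓ ≥ 1, and let J be the monomial ideal generated by {Y_{1,j}Y_{2,i} : 1 ≤ i < j ≤ h} ∪ {Y_{1,i}Y_{1,j}U : 1 ≤ i < j ≤ h} ∪ {Y_{1,i}²U : 1 ≤ i ≤ h}, where Y_{1,1},…,Y_{1,h},Y_{2,1},…,Y_{2,h},U are monomials with pairwise disjoint supports, deg(Y_{1,i}) = deg(Y_{2,i}) = ℓ, deg(U) = s+t+1. Order the generators as: first the Y_{1,j}Y_{2,i} (decreasing j, then decreasing i within equal j, as m₁ = Y_{1,h}Y_{2,h−1},…, m_{h(h−1)/2} = Y_{1,2}Y_{2,1}), then Y_{1,j}Y_{1,i}U similarly, then Y_{1,h}²U,…,Y_{1,1}²U. Then each successive colon ideal (m₁,…,m_{k−1}) : m_k is generated by a regular sequence of monomials of degree ℓ, and for the generators in the second and third blocks the lengths r_k satisfy h−1 ≤ r_k ≤ 2h−2, and for each p with h−1 ≤ p ≤ 2h−2 exactly 2h−p−1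 indices k in these blocks have r_k = p. -/
/-!
The monomials `Y_{1,a}`, `Y_{2,a}`, `U` have pairwise disjoint supports, so they behave like
distinct variables. At a generator `x^m`, the colon ideal is generated by the variables `x^t`
coprime to `x^m` for which `x^t x^m` is a multiple of an earlier generator, because every earlier
generator is divisible by one of them. These form a regular sequence of monomials of degree `ℓ`,
of length `h - 1 - i`, `h + j - i - 2` or `h + i - 2` in the three blocks. A length `p` is thus
attained by the `h - d` pairs with `j - i = d := p + 2 - h` and by the single square `Y_{1,d}²U`,
that is `2h - p - 1` times.
-/

open MvPolynomial

open Finset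

theorem Finsupp.le_of_le_add_of_disjoint_support_s16 {σ : Type*} {t d m : σ →₀ ℕ} (h : t ≤ d + m)
    (hd : Disjoint t.support m.support) : t ≤ d := by
  intro x
  by_cases hx : x ∈ t.support
  · simpa [Finsupp.notMem_support_iff.mp (disjoint_left.mp hd hx)] using h x
  · simp [Finsupp.notMem_support_iff.mp hx]

namespace MvPolynomial

variable {R : Type*} [CommSemiring R] {σ : Type*}

theorem mul_monomial_mem_span_monomial_image_iff {f : MvPolynomial σ R} {m : σ →₀ ℕ}
    {S : Set (σ →₀ ℕ)} :
    f * monomial m 1 ∈ Ideal.span ((fun e => monomial e (1 : R)) '' S) ↔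
      ∀ d ∈ f.support, ∃ s ∈ S, s ≤ d + m := by
  rw [mem_ideal_span_monomial_image]
  constructor
  · intro H d hd
    refine H _ ?_
    rwa [mem_support_iff, coeff_mul_monomial, mul_one, ← mem_support_iff]
  · intro H e he
    rw [mem_support_iff, coeff_mul_monomial'] at he
    split_ifs at he with hme
    · obtain ⟨s, hs, hle⟩ := H (e - m) (mem_support_iff.mpr (by rwa [mul_one] at he))
      exact ⟨s, hs, hle.trans_eq (tsub_add_cancel_of_le hme)⟩
    · exact absurd rfl he

theorem span_colon_monomial_eq [Nontrivial R] {G : Set (MvPolynomial σ R)} {m : σ →₀ ℕ}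
    {T : Set (σ →₀ ℕ)}
    (hG : ∀ g ∈ G, ∃ s, g = monomial s 1 ∧ ∃ t ∈ T, t ≤ s)
    (hT : ∀ t ∈ T, ∃ s ≤ t + m, monomial s 1 ∈ G)
    (hTm : ∀ t ∈ T, Disjoint t.support m.support) :
    (Ideal.span G).colon (Ideal.span {monomial m (1 : R)}) =
      Ideal.span ((fun e => monomial e (1 : R)) '' T) := by
  have hGS : G = (fun e => monomial e (1 : R)) '' {s | monomial s 1 ∈ G} := by
    ext g
    refine ⟨fun hg => ?_, fun ⟨s, hs, hsg⟩ => hsg ▸ hs⟩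
    obtain ⟨s, rfl, -⟩ := hG g hg
    exact ⟨s, hg, rfl⟩
  ext f
  rw [Ideal.mem_colon_span_singleton, hGS, mul_monomial_mem_span_monomial_image_iff,
    mem_ideal_span_monomial_image]
  constructor
  · intro H d hd
    obtain ⟨s, hs, hsd⟩ := H d hd
    obtain ⟨s', hss', t, ht, hts'⟩ := hG _ hs
    rw [(monomial_left_injective one_ne_zero hss' : s = s')] at hsd
    exact ⟨t, ht, Finsupp.le_of_le_add_of_disjoint_support_s16 (hts'.trans hsd) (hTm t ht)⟩
  · intro H d hd
    obtain ⟨t, ht, htd⟩ := H d hd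
    obtain ⟨s, hst, hs⟩ := hT t ht
    exact ⟨s, hs, hst.trans (by gcongr)⟩

end MvPolynomial

theorem isRegSeqSpan_span_image {K σ ι : Type} [Field K] (v : ι → σ →₀ ℕ) {A : Finset ι}
    {r ℓ : ℕ} (hr : #A = r) (hℓ : ℓ ≠ 0)
    (hdeg : ∀ a ∈ A, (monomial (v a) (1 : K)).totalDegree = ℓ)
    (hdisj : (A : Set ι).PairwiseDisjoint fun a => (v a).support) :
    IsRegSeqSpan (Ideal.span ((fun e => monomial e (1 : K)) '' (v '' A))) r (fun _ => ℓ) := by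
  subst hr
  let α : Fin #A → ι := fun k => A.equivFin.symm k
  have hα : ∀ k, α k ∈ A := fun k => (A.equivFin.symm k).2
  refine ⟨v ∘ α, fun k => ?_, fun k l hkl => ?_, fun k => hdeg _ (hα k), ?_⟩
  · rw [Finsupp.support_nonempty_iff]
    intro h0
    exact hℓ (by simpa [show v (α k) = 0 from h0] using (hdeg _ (hα k)).symm)
  · exact hdisj (hα k) (hα l) fun h => hkl (A.equivFin.symm.injective (Subtype.ext h))
  · change _ = Ideal.span (Set.range ((fun e => monomial e 1) ∘ v ∘ Subtype.val ∘ A.equivFin.symm))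
    rw [Set.range_comp, Set.range_comp, Set.range_comp, Equiv.range_eq_univ, Set.image_univ,
      Subtype.range_coe]

theorem card_Icc_product_filter_add_eq (h d : ℕ) :
    #((Icc 1 h ×ˢ Icc 1 h).filter fun q : ℕ × ℕ => q.1 + d = q.2) = h - d := by
  have : ((Icc 1 h ×ˢ Icc 1 h).filter fun q : ℕ × ℕ => q.1 + d = q.2) =
      (Icc 1 (h - d)).image fun a => (a, a + d) := by
    ext ⟨a, b⟩
    simp only [mem_filter, mem_product, mem_Icc, mem_image, Prod.mk.injEq]
    constructor
    · rintro ⟨⟨⟨ha, -⟩, -, hb⟩, rfl⟩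
      exact ⟨a, ⟨ha, by omega⟩, rfl, rfl⟩
    · rintro ⟨a, ⟨ha, had⟩, rfl, rfl⟩
      omega
  rw [this, card_image_of_injective _ fun a b hab => (Prod.ext_iff.1 hab).1, Nat.card_Icc]
  omega

theorem card_filter_lengths_eq {h p : ℕ} (hp : h - 1 ≤ p) :
    #((Icc 1 h ×ˢ Icc 1 h).filter fun q : ℕ × ℕ => q.1 < q.2 ∧ h + q.2 - q.1 - 2 = p) +
      #((Icc 1 h).filter fun i => h + i - 2 = p) = 2 * h - p - 1 := by
  rw [filter_congr (q := fun q : ℕ × ℕ => q.1 + (p + 2 - h) = q.2) fun q hq => by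
      simp only [mem_product, mem_Icc] at hq; omega,
    filter_congr (q := fun i => i = p + 2 - h) fun i hi => by
      simp only [mem_Icc] at hi; omega,
    card_Icc_product_filter_add_eq, filter_eq']
  split_ifs with hd <;> simp only [mem_Icc, card_singleton, card_empty] at hd ⊢ <;> omega

section

variable {σ : Type}

structure DisjointSupports (h : ℕ) (y1 y2 : ℕ → σ →₀ ℕ) (u : σ →₀ ℕ) : Prop where
  disjoint_y1_y1 : ∀ i j, 1 ≤ i → i ≤ h → 1 ≤ j → j ≤ h → i ≠ j →
    Disjoint (y1 i).support (y1 j).support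
  disjoint_y2_y2 : ∀ i j, 1 ≤ i → i ≤ h → 1 ≤ j → j ≤ h → i ≠ j →
    Disjoint (y2 i).support (y2 j).support
  disjoint_y1_y2 : ∀ i j, 1 ≤ i → i ≤ h → 1 ≤ j → j ≤ h → Disjoint (y1 i).support (y2 j).support
  disjoint_y1_u : ∀ i, 1 ≤ i → i ≤ h → Disjoint (y1 i).support u.support
  disjoint_y2_u : ∀ i, 1 ≤ i → i ≤ h → Disjoint (y2 i).support u.support

namespace DisjointSupports

variable {h : ℕ} {y1 y2 : ℕ → σ →₀ ℕ} {u : σ →₀ ℕ}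

theorem pairwiseDisjoint_sumElim (hD : DisjointSupports h y1 y2 u) :
    ((Icc 1 h).disjSum (Icc 1 h) : Set (ℕ ⊕ ℕ)).PairwiseDisjoint
      fun a => (Sum.elim y1 y2 a).support := by
  rintro (a | a) ha (b | b) hb hab <;>
    simp only [mem_coe, inl_mem_disjSum, inr_mem_disjSum, mem_Icc] at ha hb
  · exact hD.disjoint_y1_y1 a b ha.1 ha.2 hb.1 hb.2 fun h => hab (congrArg _ h)
  · exact hD.disjoint_y1_y2 a b ha.1 ha.2 hb.1 hb.2
  · exact (hD.disjoint_y1_y2 b a hb.1 hb.2 ha.1 ha.2).symm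
  · exact hD.disjoint_y2_y2 a b ha.1 ha.2 hb.1 hb.2 fun h => hab (congrArg _ h)

theorem isRegSeqSpan_span_sumElim (hD : DisjointSupports h y1 y2 u) {K : Type} [Field K] {ℓ : ℕ}
    (hℓ : ℓ ≠ 0)
    (hdeg1 : ∀ i, 1 ≤ i → i ≤ h → (monomial (y1 i) (1 : K)).totalDegree = ℓ)
    (hdeg2 : ∀ i, 1 ≤ i → i ≤ h → (monomial (y2 i) (1 : K)).totalDegree = ℓ)
    {A B : Finset ℕ} (hA : A ⊆ Icc 1 h) (hB : B ⊆ Icc 1 h) {r : ℕ} (hr : #A + #B = r) :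
    IsRegSeqSpan (Ideal.span ((fun e => monomial e (1 : K)) '' (Sum.elim y1 y2 '' A.disjSum B)))
      r fun _ => ℓ := by
  refine isRegSeqSpan_span_image _ (card_disjSum A B ▸ hr) hℓ ?_
    (hD.pairwiseDisjoint_sumElim.subset (by simpa using disjSum_mono hA hB))
  rintro (a | a) ha <;> simp only [inl_mem_disjSum, inr_mem_disjSum] at ha
  · exact hdeg1 a (mem_Icc.1 (hA ha)).1 (mem_Icc.1 (hA ha)).2
  · exact hdeg2 a (mem_Icc.1 (hB ha)).1 (mem_Icc.1 (hB ha)).2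

variable {R : Type*} [CommSemiring R] [Nontrivial R]

theorem firstBlock_colon_eq (hD : DisjointSupports h y1 y2 u) {i j : ℕ} (hi : 1 ≤ i) (hij : i < j)
    (hj : j ≤ h) :
    (Ideal.span {x | ∃ p q, 1 ≤ p ∧ p < q ∧ q ≤ h ∧ (i < p ∨ (p = i ∧ j < q)) ∧
        x = monomial (y1 q + y2 p) (1 : R)}).colon
        (Ideal.span {monomial (y1 j + y2 i) (1 : R)}) =
      Ideal.span ((fun e => monomial e (1 : R)) ''
        (Sum.elim y1 y2 '' ((Ioc j h).disjSum (Ioo i j)))) := by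
  refine span_colon_monomial_eq ?_ ?_ ?_
  · rintro _ ⟨p, q, hp, hpq, hq, hafter, rfl⟩
    refine ⟨_, rfl, ?_⟩
    rcases hafter with hip | ⟨rfl, hjq⟩
    · by_cases hpj : p < j
      · exact ⟨y2 p, ⟨.inr p, by simp; omega, rfl⟩, le_add_self⟩
      · exact ⟨y1 q, ⟨.inl q, by simp; omega, rfl⟩, le_self_add⟩
    · exact ⟨y1 q, ⟨.inl q, by simp; omega, rfl⟩, le_self_add⟩
  · rintro _ ⟨a | a, ha, rfl⟩ <;>
      simp only [mem_coe, inl_mem_disjSum, inr_mem_disjSum, mem_Ioc, mem_Ioo,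
        Sum.elim_inl, Sum.elim_inr] at ha ⊢
    · exact ⟨y1 a + y2 i, fun x => by simp only [Finsupp.add_apply]; omega,
        i, a, hi, by omega, ha.2, .inr ⟨rfl, ha.1⟩, rfl⟩
    · exact ⟨y1 j + y2 a, fun x => by simp only [Finsupp.add_apply]; omega,
        a, j, by omega, ha.2, hj, .inl ha.1, rfl⟩
  · classical
    rintro _ ⟨a | a, ha, rfl⟩ <;>
      simp only [mem_coe, inl_mem_disjSum, inr_mem_disjSum, mem_Ioc, mem_Ioo] at ha <;>
      simp only [Sum.elim_inl, Sum.elim_inr, Finsupp.support_add_eq_union, disjoint_union_right]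
    · exact ⟨hD.disjoint_y1_y1 a j (by omega) ha.2 (by omega) hj (by omega),
        hD.disjoint_y1_y2 a i (by omega) ha.2 hi (by omega)⟩
    · exact ⟨(hD.disjoint_y1_y2 j a (by omega) hj (by omega) (by omega)).symm,
        hD.disjoint_y2_y2 a i (by omega) (by omega) hi (by omega) (by omega)⟩

theorem secondBlock_colon_eq (hD : DisjointSupports h y1 y2 u) {i j : ℕ} (hi : 1 ≤ i) (hij : i < j)
    (hj : j ≤ h) :
    (Ideal.span ({x | ∃ p q, 1 ≤ p ∧ p < q ∧ q ≤ h ∧ x = monomial (y1 q + y2 p) (1 : R)} ∪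
        {x | ∃ p q, 1 ≤ p ∧ p < q ∧ q ≤ h ∧ (i < p ∨ (p = i ∧ j < q)) ∧
          x = monomial (y1 q + y1 p + u) (1 : R)})).colon
        (Ideal.span {monomial (y1 j + y1 i + u) (1 : R)}) =
      Ideal.span ((fun e => monomial e (1 : R)) ''
        (Sum.elim y1 y2 '' (((Ioc i h).erase j).disjSum (Ico 1 j)))) := by
  refine span_colon_monomial_eq ?_ ?_ ?_
  · rintro _ (⟨p, q, hp, hpq, hq, rfl⟩ | ⟨p, q, hp, hpq, hq, hafter, rfl⟩) <;>
      refine ⟨_, rfl, ?_⟩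
    · by_cases hpj : p < j
      · exact ⟨y2 p, ⟨.inr p, by simp; omega, rfl⟩, le_add_self⟩
      · exact ⟨y1 q, ⟨.inl q, by simp; omega, rfl⟩, le_self_add⟩
    · by_cases hpj : p = j ∨ p = i
      · exact ⟨y1 q, ⟨.inl q, by simp; omega, rfl⟩, le_self_add.trans le_self_add⟩
      · exact ⟨y1 p, ⟨.inl p, by simp; omega, rfl⟩, le_add_self.trans le_self_add⟩
  · rintro _ ⟨a | a, ha, rfl⟩ <;>
      simp only [mem_coe, inl_mem_disjSum, inr_mem_disjSum, mem_erase, mem_Ioc, mem_Ico,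
        Sum.elim_inl, Sum.elim_inr] at ha ⊢
    · rcases lt_or_gt_of_ne ha.1 with haj | haj
      · exact ⟨y1 j + y1 a + u, fun x => by simp only [Finsupp.add_apply]; omega,
          .inr ⟨a, j, by omega, haj, hj, .inl ha.2.1, rfl⟩⟩
      · exact ⟨y1 a + y1 i + u, fun x => by simp only [Finsupp.add_apply]; omega,
          .inr ⟨i, a, hi, by omega, ha.2.2, .inr ⟨rfl, haj⟩, rfl⟩⟩
    · exact ⟨y1 j + y2 a, fun x => by simp only [Finsupp.add_apply]; omega,
        .inl ⟨a, j, ha.1, ha.2, hj, rfl⟩⟩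
  · classical
    rintro _ ⟨a | a, ha, rfl⟩ <;>
      simp only [mem_coe, inl_mem_disjSum, inr_mem_disjSum, mem_erase, mem_Ioc, mem_Ico] at ha <;>
      simp only [Sum.elim_inl, Sum.elim_inr, Finsupp.support_add_eq_union, disjoint_union_right]
    · exact ⟨⟨hD.disjoint_y1_y1 a j (by omega) ha.2.2 (by omega) hj ha.1,
        hD.disjoint_y1_y1 a i (by omega) ha.2.2 hi (by omega) (by omega)⟩,
        hD.disjoint_y1_u a (by omega) ha.2.2⟩
    · exact ⟨⟨(hD.disjoint_y1_y2 j a (by omega) hj ha.1 (by omega)).symm,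
        (hD.disjoint_y1_y2 i a hi (by omega) ha.1 (by omega)).symm⟩,
        hD.disjoint_y2_u a ha.1 (by omega)⟩

theorem thirdBlock_colon_eq (hD : DisjointSupports h y1 y2 u) {i : ℕ} (hi : 1 ≤ i) (hih : i ≤ h) :
    (Ideal.span ({x | ∃ p q, 1 ≤ p ∧ p < q ∧ q ≤ h ∧ x = monomial (y1 q + y2 p) (1 : R)} ∪
        {x | ∃ p q, 1 ≤ p ∧ p < q ∧ q ≤ h ∧ x = monomial (y1 q + y1 p + u) (1 : R)} ∪
        {x | ∃ p, i < p ∧ p ≤ h ∧ x = monomial (y1 p + y1 p + u) (1 : R)})).colon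
        (Ideal.span {monomial (y1 i + y1 i + u) (1 : R)}) =
      Ideal.span ((fun e => monomial e (1 : R)) ''
        (Sum.elim y1 y2 '' (((Icc 1 h).erase i).disjSum (Ico 1 i)))) := by
  refine span_colon_monomial_eq ?_ ?_ ?_
  · rintro _ ((⟨p, q, hp, hpq, hq, rfl⟩ | ⟨p, q, hp, hpq, hq, rfl⟩) | ⟨p, hip, hp, rfl⟩) <;>
      refine ⟨_, rfl, ?_⟩
    · by_cases hqi : q = i
      · exact ⟨y2 p, ⟨.inr p, by simp; omega, rfl⟩, le_add_self⟩
      · exact ⟨y1 q, ⟨.inl q, by simp; omega, rfl⟩, le_self_add⟩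
    · by_cases hqi : q = i
      · exact ⟨y1 p, ⟨.inl p, by simp; omega, rfl⟩, le_add_self.trans le_self_add⟩
      · exact ⟨y1 q, ⟨.inl q, by simp; omega, rfl⟩, le_self_add.trans le_self_add⟩
    · exact ⟨y1 p, ⟨.inl p, by simp; omega, rfl⟩, le_self_add.trans le_self_add⟩
  · rintro _ ⟨a | a, ha, rfl⟩ <;>
      simp only [mem_coe, inl_mem_disjSum, inr_mem_disjSum, mem_erase, mem_Icc, mem_Ico,
        Sum.elim_inl, Sum.elim_inr] at ha ⊢
    · rcases lt_or_gt_of_ne ha.1 with hai | hai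
      · exact ⟨y1 i + y1 a + u, fun x => by simp only [Finsupp.add_apply]; omega,
          .inl (.inr ⟨a, i, ha.2.1, hai, hih, rfl⟩)⟩
      · exact ⟨y1 a + y1 i + u, fun x => by simp only [Finsupp.add_apply]; omega,
          .inl (.inr ⟨i, a, hi, hai, ha.2.2, rfl⟩)⟩
    · exact ⟨y1 i + y2 a, fun x => by simp only [Finsupp.add_apply]; omega,
        .inl (.inl ⟨a, i, ha.1, ha.2, hih, rfl⟩)⟩
  · classical
    rintro _ ⟨a | a, ha, rfl⟩ <;>
      simp only [mem_coe, inl_mem_disjSum, inr_mem_disjSum, mem_erase, mem_Icc, mem_Ico] at ha <;>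
      simp only [Sum.elim_inl, Sum.elim_inr, Finsupp.support_add_eq_union, union_self,
        disjoint_union_right]
    · exact ⟨hD.disjoint_y1_y1 a i ha.2.1 ha.2.2 hi hih ha.1, hD.disjoint_y1_u a ha.2.1 ha.2.2⟩
    · exact ⟨(hD.disjoint_y1_y2 i a hi hih ha.1 (by omega)).symm,
        hD.disjoint_y2_u a ha.1 (by omega)⟩

end DisjointSupports

end

theorem stmt_16_general {K : Type} [Field K] {σ : Type} (h ℓ : ℕ)
    (hℓ : 1 ≤ ℓ)
    (y1 y2 : ℕ → (σ →₀ ℕ)) (u : σ →₀ ℕ)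
    (hdeg1 : ∀ i, 1 ≤ i → i ≤ h → (monomial (y1 i) (1 : K)).totalDegree = ℓ)
    (hdeg2 : ∀ i, 1 ≤ i → i ≤ h → (monomial (y2 i) (1 : K)).totalDegree = ℓ)
    (hdisj11 : ∀ i j, 1 ≤ i → i ≤ h → 1 ≤ j → j ≤ h → i ≠ j →
      Disjoint (y1 i).support (y1 j).support)
    (hdisj22 : ∀ i j, 1 ≤ i → i ≤ h → 1 ≤ j → j ≤ h → i ≠ j →
      Disjoint (y2 i).support (y2 j).support)
    (hdisj12 : ∀ i j, 1 ≤ i → i ≤ h → 1 ≤ j → j ≤ h →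
      Disjoint (y1 i).support (y2 j).support)
    (hdisj1u : ∀ i, 1 ≤ i → i ≤ h → Disjoint (y1 i).support u.support)
    (hdisj2u : ∀ i, 1 ≤ i → i ≤ h → Disjoint (y2 i).support u.support)
    (Y1 Y2 : ℕ → MvPolynomial σ K) (U : MvPolynomial σ K)
    (hY1 : ∀ i, Y1 i = monomial (y1 i) 1) (hY2 : ∀ i, Y2 i = monomial (y2 i) 1)
    (hU : U = monomial u 1) :
    ∃ (r1 r2 : ℕ → ℕ → ℕ) (r3 : ℕ → ℕ),
      -- colon ideals within the first block
      (∀ i j, 1 ≤ i → i < j → j ≤ h → ¬(i = h - 1 ∧ j = h) →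
        IsRegSeqSpan
          ((Ideal.span {x | ∃ p q, 1 ≤ p ∧ p < q ∧ q ≤ h ∧ (i < p ∨ (p = i ∧ j < q)) ∧
              x = Y1 q * Y2 p}).colon (Ideal.span {Y1 j * Y2 i}))
          (r1 i j) (fun _ => ℓ)) ∧
      -- colon ideals at generators of the second block
      (∀ i j, 1 ≤ i → i < j → j ≤ h →
        IsRegSeqSpan
          ((Ideal.span
              ({x | ∃ p q, 1 ≤ p ∧ p < q ∧ q ≤ h ∧ x = Y1 q * Y2 p} ∪
               {x | ∃ p q, 1 ≤ p ∧ p < q ∧ q ≤ h ∧ (i < p ∨ (p = i ∧ j < q)) ∧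
                  x = Y1 q * Y1 p * U})).colon (Ideal.span {Y1 j * Y1 i * U}))
          (r2 i j) (fun _ => ℓ)) ∧
      -- colon ideals at generators of the third block
      (∀ i, 1 ≤ i → i ≤ h →
        IsRegSeqSpan
          ((Ideal.span
              ({x | ∃ p q, 1 ≤ p ∧ p < q ∧ q ≤ h ∧ x = Y1 q * Y2 p} ∪
               {x | ∃ p q, 1 ≤ p ∧ p < q ∧ q ≤ h ∧ x = Y1 q * Y1 p * U} ∪
               {x | ∃ p, i < p ∧ p ≤ h ∧ x = Y1 p * Y1 p * U})).colon
            (Ideal.span {Y1 i * Y1 i * U}))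
          (r3 i) (fun _ => ℓ)) ∧
      -- bounds for the lengths in the second and third blocks
      (∀ i j, 1 ≤ i → i < j → j ≤ h → h - 1 ≤ r2 i j ∧ r2 i j ≤ 2 * h - 2) ∧
      (∀ i, 1 ≤ i → i ≤ h → h - 1 ≤ r3 i ∧ r3 i ≤ 2 * h - 2) ∧
      -- counting statement
      (∀ p, h - 1 ≤ p → p ≤ 2 * h - 2 →
        ((Finset.Icc 1 h ×ˢ Finset.Icc 1 h).filter
            (fun q => q.1 < q.2 ∧ r2 q.1 q.2 = p)).card
          + ((Finset.Icc 1 h).filter (fun i => r3 i = p)).card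
        = 2 * h - p - 1) := by
  have hD : DisjointSupports h y1 y2 u := ⟨hdisj11, hdisj22, hdisj12, hdisj1u, hdisj2u⟩
  refine ⟨fun i _ => h - 1 - i, fun i j => h + j - i - 2, fun i => h + i - 2,
    fun i j hi hij hj _ => ?_, fun i j hi hij hj => ?_, fun i hi hih => ?_,
    fun i j _ hij hj => by dsimp only; omega, fun i hi hih => by dsimp only; omega,
    fun p hp _ => card_filter_lengths_eq hp⟩
  · simp only [hY1, hY2, monomial_mul, mul_one]
    rw [hD.firstBlock_colon_eq hi hij hj]
    exact hD.isRegSeqSpan_span_sumElim (by omega) hdeg1 hdeg2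
      (fun a ha => by simp at ha ⊢; omega) (fun a ha => by simp at ha ⊢; omega)
      (by simp; omega)
  · simp only [hY1, hY2, hU, monomial_mul, mul_one]
    rw [hD.secondBlock_colon_eq hi hij hj]
    exact hD.isRegSeqSpan_span_sumElim (by omega) hdeg1 hdeg2
      (fun a ha => by simp at ha ⊢; omega) (fun a ha => by simp at ha ⊢; omega)
      (by rw [card_erase_of_mem (by simp; omega)]; simp; omega)
  · simp only [hY1, hY2, hU, monomial_mul, mul_one]
    rw [hD.thirdBlock_colon_eq hi hih]
    exact hD.isRegSeqSpan_span_sumElim (by omega) hdeg1 hdeg2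
      (fun a ha => by simp at ha ⊢; omega) (fun a ha => by simp at ha ⊢; omega)
      (by rw [card_erase_of_mem (by simp; omega)]; simp; omega)

/-- Regular quotients for the generators of the initial ideal of `I_{B_{ℓ,h}^{s,t}}`,
ordered as: first the `Y_{1,j}Y_{2,i}` (`i<j`, ordered decreasingly in `i` then in `j`),
then the `Y_{1,j}Y_{1,i}U` similarly, then `Y_{1,h}²U,…,Y_{1,1}²U`.  Every successive colon
ideal is generated by a regular sequence of monomials of degree `ℓ`; the lengths `r_k` for
generators in the second and third blocks satisfy `h−1 ≤ r_k ≤ 2h−2`, and for every `p`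
with `h−1 ≤ p ≤ 2h−2` exactly `2h−p−1` of them have `r_k = p`. -/
theorem stmt_16 {K : Type} [Field K] {σ : Type} (h ℓ s t : ℕ)
    (hh : 2 ≤ h) (hℓ : 1 ≤ ℓ) (hs : 1 ≤ s) (ht : 1 ≤ t)
    (y1 y2 : ℕ → (σ →₀ ℕ)) (u : σ →₀ ℕ)
    (hdeg1 : ∀ i, 1 ≤ i → i ≤ h → (monomial (y1 i) (1 : K)).totalDegree = ℓ)
    (hdeg2 : ∀ i, 1 ≤ i → i ≤ h → (monomial (y2 i) (1 : K)).totalDegree = ℓ)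
    (hdegu : (monomial u (1 : K)).totalDegree = s + t + 1)
    (hdisj11 : ∀ i j, 1 ≤ i → i ≤ h → 1 ≤ j → j ≤ h → i ≠ j →
      Disjoint (y1 i).support (y1 j).support)
    (hdisj22 : ∀ i j, 1 ≤ i → i ≤ h → 1 ≤ j → j ≤ h → i ≠ j →
      Disjoint (y2 i).support (y2 j).support)
    (hdisj12 : ∀ i j, 1 ≤ i → i ≤ h → 1 ≤ j → j ≤ h →
      Disjoint (y1 i).support (y2 j).support)
    (hdisj1u : ∀ i, 1 ≤ i → i ≤ h → Disjoint (y1 i).support u.support)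
    (hdisj2u : ∀ i, 1 ≤ i → i ≤ h → Disjoint (y2 i).support u.support)
    (Y1 Y2 : ℕ → MvPolynomial σ K) (U : MvPolynomial σ K)
    (hY1 : ∀ i, Y1 i = monomial (y1 i) 1) (hY2 : ∀ i, Y2 i = monomial (y2 i) 1)
    (hU : U = monomial u 1) :
    ∃ (r1 r2 : ℕ → ℕ → ℕ) (r3 : ℕ → ℕ),
      -- colon ideals within the first block
      (∀ i j, 1 ≤ i → i < j → j ≤ h → ¬(i = h - 1 ∧ j = h) →
        IsRegSeqSpan
          ((Ideal.span {x | ∃ p q, 1 ≤ p ∧ p < q ∧ q ≤ h ∧ (i < p ∨ (p = i ∧ j < q)) ∧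
              x = Y1 q * Y2 p}).colon (Ideal.span {Y1 j * Y2 i}))
          (r1 i j) (fun _ => ℓ)) ∧
      -- colon ideals at generators of the second block
      (∀ i j, 1 ≤ i → i < j → j ≤ h →
        IsRegSeqSpan
          ((Ideal.span
              ({x | ∃ p q, 1 ≤ p ∧ p < q ∧ q ≤ h ∧ x = Y1 q * Y2 p} ∪
               {x | ∃ p q, 1 ≤ p ∧ p < q ∧ q ≤ h ∧ (i < p ∨ (p = i ∧ j < q)) ∧
                  x = Y1 q * Y1 p * U})).colon (Ideal.span {Y1 j * Y1 i * U}))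
          (r2 i j) (fun _ => ℓ)) ∧
      -- colon ideals at generators of the third block
      (∀ i, 1 ≤ i → i ≤ h →
        IsRegSeqSpan
          ((Ideal.span
              ({x | ∃ p q, 1 ≤ p ∧ p < q ∧ q ≤ h ∧ x = Y1 q * Y2 p} ∪
               {x | ∃ p q, 1 ≤ p ∧ p < q ∧ q ≤ h ∧ x = Y1 q * Y1 p * U} ∪
               {x | ∃ p, i < p ∧ p ≤ h ∧ x = Y1 p * Y1 p * U})).colon
            (Ideal.span {Y1 i * Y1 i * U}))
          (r3 i) (fun _ => ℓ)) ∧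
      -- bounds for the lengths in the second and third blocks
      (∀ i j, 1 ≤ i → i < j → j ≤ h → h - 1 ≤ r2 i j ∧ r2 i j ≤ 2 * h - 2) ∧
      (∀ i, 1 ≤ i → i ≤ h → h - 1 ≤ r3 i ∧ r3 i ≤ 2 * h - 2) ∧
      -- counting statement
      (∀ p, h - 1 ≤ p → p ≤ 2 * h - 2 →
        ((Finset.Icc 1 h ×ˢ Finset.Icc 1 h).filter
            (fun q => q.1 < q.2 ∧ r2 q.1 q.2 = p)).card
          + ((Finset.Icc 1 h).filter (fun i => r3 i = p)).card
        = 2 * h - p - 1) :=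
  stmt_16_general h ℓ hℓ y1 y2 u hdeg1 hdeg2 hdisj11 hdisj22 hdisj12 hdisj1u hdisj2u Y1 Y2 U hY1 hY2
    hU
end
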